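/- Assume Δna ≠ 0 and ‖Δna‖ < r + r′. Then h is (left-)differentiable at α = 1 within [0,1], and its derivative there equals √ρ̃a · (‖Δna‖ − (r + r′) − ⟨Δna, Δna − Δnb⟩/‖Δna‖). In particular, the sign of the derivative of h at 1 equals the sign of ‖Δna‖ − (r + r′) − ⟨Δna, Δna − Δnb⟩/‖Δna‖. -/

import Mathlib

open Set
open scoped RealInnerProductSpace

/-!
Since `‖Δna‖ < r + r'`, the clearance `(r + r') - ‖αΔna + (1 - α)Δnb‖` is positive near `α = 1`,
so there the `max` with `0` is inactive and `h` is the smooth quotient of the clearance by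
`√(α²/ρ̃a + (1 - α)²/ρ̃b)`. At `α = 1` the denominator has both value and derivative `1/√ρ̃a`,
and the quotient rule produces the factor `√ρ̃a > 0`, which does not change the sign.
-/

theorem Real.sign_mul_of_pos {a : ℝ} (ha : 0 < a) (x : ℝ) : Real.sign (a * x) = Real.sign x := by
  rcases lt_trichotomy x 0 with hx | rfl | hx
  · rw [Real.sign_of_neg hx, Real.sign_of_neg (mul_neg_of_pos_of_neg ha hx)]
  · rw [mul_zero]
  · rw [Real.sign_of_pos hx, Real.sign_of_pos (mul_pos ha hx)]

theorem HasDerivAt.const_max {f : ℝ → ℝ} {f' x : ℝ} (hf : HasDerivAt f f' x) {c : ℝ}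
    (hc : c < f x) : HasDerivAt (fun y => max c (f y)) f' x := by
  refine hf.congr_of_eventuallyEq ?_
  filter_upwards [hf.continuousAt.eventually (lt_mem_nhds hc)] with y hy
  exact max_eq_right hy.le

section InnerProductSpace

variable {E : Type*} [NormedAddCommGroup E] [InnerProductSpace ℝ E]

theorem HasDerivAt.norm {c : ℝ → E} {c' : E} {t : ℝ} (hc : HasDerivAt c c' t) (h0 : c t ≠ 0) :
    HasDerivAt (fun s => ‖c s‖) (⟪c t, c'⟫ / ‖c t‖) t := by
  have hsqrt := hc.norm_sq.sqrt (by positivity)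
  simp only [Real.sqrt_sq (norm_nonneg _)] at hsqrt
  convert hsqrt using 1
  field_simp

theorem hasDerivAt_smul_add_one_sub_smul (a b : E) (t : ℝ) :
    HasDerivAt (fun β : ℝ => β • a + (1 - β) • b) (a - b) t := by
  have := ((hasDerivAt_id t).smul_const a).fun_add (((hasDerivAt_id t).const_sub 1).smul_const b)
  simpa [sub_eq_add_neg] using this

theorem hasDerivAt_norm_smul_add_one_sub_smul_one {a : E} (b : E) (ha : a ≠ 0) :
    HasDerivAt (fun β : ℝ => ‖β • a + (1 - β) • b‖) (⟪a, a - b⟫ / ‖a‖) 1 := by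
  simpa using (hasDerivAt_smul_add_one_sub_smul a b 1).norm (by simpa using ha)

end InnerProductSpace

theorem sqrt_weight_one (ρa ρb : ℝ) : √((1 : ℝ) ^ 2 / ρa + (1 - 1) ^ 2 / ρb) = (√ρa)⁻¹ := by
  simp [Real.sqrt_inv]

theorem hasDerivAt_sqrt_weight_one {ρa : ℝ} (hρa : 0 < ρa) (ρb : ℝ) :
    HasDerivAt (fun β : ℝ => √(β ^ 2 / ρa + (1 - β) ^ 2 / ρb)) (√ρa)⁻¹ 1 := by
  have hu : HasDerivAt (fun β : ℝ => β ^ 2 / ρa + (1 - β) ^ 2 / ρb) (2 / ρa) 1 := by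
    have := ((hasDerivAt_pow 2 (1 : ℝ)).div_const ρa).fun_add
      ((((hasDerivAt_id (1 : ℝ)).const_sub 1).pow 2).div_const ρb)
    simpa using this
  have hsqrt := hu.sqrt (by simp [hρa.ne'])
  refine hsqrt.congr_deriv ?_
  rw [sqrt_weight_one]
  field_simp
  exact Real.sq_sqrt hρa.le

theorem hasDerivAt_clearance_div_sqrt_weight_one {E : Type*} [NormedAddCommGroup E]
    [InnerProductSpace ℝ E] {a : E} (b : E) (ha : a ≠ 0) (R : ℝ) {ρa : ℝ} (hρa : 0 < ρa)
    (ρb : ℝ) :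
    HasDerivAt (fun β : ℝ => (R - ‖β • a + (1 - β) • b‖) / √(β ^ 2 / ρa + (1 - β) ^ 2 / ρb))
      (√ρa * (‖a‖ - R - ⟪a, a - b⟫ / ‖a‖)) 1 := by
  have hs : 0 < √ρa := Real.sqrt_pos.mpr hρa
  have hquot := ((hasDerivAt_norm_smul_add_one_sub_smul_one b ha).const_sub R).fun_div
    (hasDerivAt_sqrt_weight_one hρa ρb) (by simp [hs.ne'])
  refine hquot.congr_deriv ?_
  rw [sqrt_weight_one]
  simp only [one_smul, sub_self, zero_smul, add_zero]
  field_simp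
  ring

theorem stmt_12_general
    (d : ℕ)
    (Δna Δnb : EuclideanSpace ℝ (Fin d))
    (r r' : ℝ)
    (ρta ρtb : ℝ) (hρta : 0 < ρta)
    (h : ℝ → ℝ)
    (hh : ∀ β : ℝ, h β = max 0
      (((r + r') - ‖β • Δna + (1 - β) • Δnb‖) /
        Real.sqrt (β ^ 2 / ρta + (1 - β) ^ 2 / ρtb)))
    (hΔna : Δna ≠ 0) (hlt : ‖Δna‖ < r + r') :
    HasDerivWithinAt h
      (Real.sqrt ρta * (‖Δna‖ - (r + r') - ⟪Δna, Δna - Δnb⟫ / ‖Δna‖))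
      (Icc (0 : ℝ) 1) 1 ∧
    Real.sign (derivWithin h (Icc (0 : ℝ) 1) 1) =
      Real.sign (‖Δna‖ - (r + r') - ⟪Δna, Δna - Δnb⟫ / ‖Δna‖) := by
  obtain rfl : h = _ := funext hh
  have hclearance : 0 < (r + r' - ‖Δna‖) / (√ρta)⁻¹ := by
    have := sub_pos.mpr hlt
    positivity
  have hderiv := ((hasDerivAt_clearance_div_sqrt_weight_one Δnb hΔna (r + r') hρta ρtb).const_max
    (by simpa [sqrt_weight_one] using hclearance)).hasDerivWithinAt (s := Icc (0 : ℝ) 1)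
  refine ⟨hderiv, ?_⟩
  rw [hderiv.derivWithin (uniqueDiffOn_Icc one_pos 1 (right_mem_Icc.mpr zero_le_one))]
  exact Real.sign_mul_of_pos (Real.sqrt_pos.mpr hρta) _

/-- Left derivative of `h` at `α = 1` within `[0,1]`, and its sign
(the "easy case" test at `α = 1`). -/
theorem stmt_12
    (d : ℕ) (hd : 1 ≤ d)
    (Δna Δnb : EuclideanSpace ℝ (Fin d))
    (r r' : ℝ) (hr : 0 < r) (hr' : 0 < r')
    (ρta ρtb : ℝ) (hρta : 0 < ρta) (hρtb : 0 < ρtb)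
    (h : ℝ → ℝ)
    (hh : ∀ β : ℝ, h β = max 0
      (((r + r') - ‖β • Δna + (1 - β) • Δnb‖) /
        Real.sqrt (β ^ 2 / ρta + (1 - β) ^ 2 / ρtb)))
    (hΔna : Δna ≠ 0) (hlt : ‖Δna‖ < r + r') :
    HasDerivWithinAt h
      (Real.sqrt ρta * (‖Δna‖ - (r + r') - ⟪Δna, Δna - Δnb⟫ / ‖Δna‖))
      (Icc (0 : ℝ) 1) 1 ∧
    Real.sign (derivWithin h (Icc (0 : ℝ) 1) 1) =
      Real.sign (‖Δna‖ - (r + r') - ⟪Δna, Δna - Δnb⟫ / ‖Δna‖) :=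
  stmt_12_general d Δna Δnb r r' ρta ρtb hρta h hh hΔna hlt
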